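/- arXiv:math/0606497 — 3 statements merged into one kernel-verified Lean document; each statement's English description precedes it below -/
import Mathlib

section
/- Let f : ℝ → ℝ be the logistic function f(x) = exp(x)/(1 + exp(x)). Let Z be a real random variable on a probability space that is symmetric about zero (Z and −Z have the same distribution) and satisfies P(Z = 0) < 1. Then for every a > 0 one has 1/2 < E[f(a + Z)] < f(a), and for every a < 0 one has f(a) < E[f(a + Z)] < 1/2. In particular, for a ≠ 0 the marginal mean E[f(a + Z)] of a random-intercept logistic model is strictly closer to 1/2 than the conditional mean f(a) evaluated at the median random intercept, so the marginal covariate effect is strictly attenuated relative to the random-effects (conditional) effect. -/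
open MeasureTheory

private lemma alg_rw {u t : ℝ} (hu : 0 < u) (ht : 0 < t) :
    (u/t)/(1+u/t) = u/(t+u) := by
  field_simp

private lemma alg_lower {u t : ℝ} (hu : 1 < u) (ht : 0 < t) :
    1 < u*t/(1+u*t) + u/(t+u) := by
  have h1 : 0 < 1 + u*t := by positivity
  have h2 : 0 < t + u := by positivity
  rw [div_add_div _ _ (ne_of_gt h1) (ne_of_gt h2), lt_div_iff₀ (by positivity)]
  nlinarith [mul_pos ht (mul_pos (sub_pos.2 hu) (by linarith : (0:ℝ) < u + 1))]

private lemma alg_upper {u t : ℝ} (hu : 1 < u) (ht : 0 < t) :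
    u*t/(1+u*t) + u/(t+u) ≤ 2*(u/(1+u)) := by
  have h1 : 0 < 1 + u*t := by positivity
  have h2 : 0 < t + u := by positivity
  have h3 : 0 < 1 + u := by positivity
  rw [div_add_div _ _ (ne_of_gt h1) (ne_of_gt h2), ← mul_div_assoc, div_le_div_iff₀ (by positivity) h3]
  nlinarith [mul_nonneg (mul_nonneg (by linarith : (0:ℝ) ≤ u) (sub_nonneg.2 hu.le)) (sq_nonneg (t-1))]

private lemma alg_upper_strict {u t : ℝ} (hu : 1 < u) (ht : 0 < t) (ht1 : t ≠ 1) :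
    u*t/(1+u*t) + u/(t+u) < 2*(u/(1+u)) := by
  have h1 : 0 < 1 + u*t := by positivity
  have h2 : 0 < t + u := by positivity
  have h3 : 0 < 1 + u := by positivity
  have ht1' : (0:ℝ) < (t-1)^2 := by
    have h : t - 1 ≠ 0 := sub_ne_zero.2 ht1
    positivity
  rw [div_add_div _ _ (ne_of_gt h1) (ne_of_gt h2), ← mul_div_assoc, div_lt_div_iff₀ (by positivity) h3]
  nlinarith [mul_pos (mul_pos (by linarith : (0:ℝ) < u) (sub_pos.2 hu)) ht1']

/-- Attenuation of the marginal mean in a random-intercept logistic model: if `Z`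
is symmetric about zero (i.e. `Z` and `-Z` have the same distribution) and is not
almost surely `0`, then for `a > 0` the marginal mean `E[f(a + Z)]` lies strictly
between `1/2` and the conditional mean `f(a)`, and symmetrically for `a < 0`. -/
theorem logistic_marginal_attenuation {Ω : Type*} [MeasurableSpace Ω]
    (μ : Measure Ω) [IsProbabilityMeasure μ]
    (f : ℝ → ℝ) (hf : ∀ x, f x = Real.exp x / (1 + Real.exp x))
    (Z : Ω → ℝ) (hZ : Measurable Z)
    (hsymm : Measure.map Z μ = Measure.map (fun ω => -Z ω) μ)
    (hZ0 : μ {ω | Z ω = 0} < 1) :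
    (∀ a : ℝ, 0 < a →
      1 / 2 < ∫ ω, f (a + Z ω) ∂μ ∧ ∫ ω, f (a + Z ω) ∂μ < f a) ∧
    (∀ a : ℝ, a < 0 →
      f a < ∫ ω, f (a + Z ω) ∂μ ∧ ∫ ω, f (a + Z ω) ∂μ < 1 / 2) := by
  have hfpos : ∀ x, 0 < f x := fun x => by rw [hf]; positivity
  have hflt : ∀ x, f x < 1 := fun x => by
    rw [hf, div_lt_one (by positivity)]; linarith [Real.exp_pos x]
  have hfneg : ∀ x, f (-x) = 1 - f x := fun x => by
    rw [hf, hf, Real.exp_neg]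
    have := Real.exp_pos x
    field_simp
    ring
  have hfc : Continuous f := by
    have : f = fun x => Real.exp x / (1 + Real.exp x) := funext hf
    rw [this]
    exact Real.continuous_exp.div (continuous_const.add Real.continuous_exp)
      (fun x => by positivity)
  -- integrability
  have hint : ∀ g : Ω → ℝ, Measurable g → Integrable (fun ω => f (g ω)) μ := by
    intro g hg
    refine Integrable.mono' (integrable_const 1)
      ((hfc.measurable.comp hg).aestronglyMeasurable) ?_
    filter_upwards with ω
    rw [Real.norm_eq_abs, abs_of_nonneg (hfpos _).le]
    exact (hflt _).le
  -- symmetry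
  have hsym : ∀ c : ℝ, ∫ ω, f (c + Z ω) ∂μ = ∫ ω, f (c - Z ω) ∂μ := by
    intro c
    have hmc : AEStronglyMeasurable (fun x : ℝ => f (c + x)) (Measure.map Z μ) :=
      (hfc.comp (continuous_const.add continuous_id)).aestronglyMeasurable
    have hmc' : AEStronglyMeasurable (fun x : ℝ => f (c + x)) (Measure.map (fun ω => -Z ω) μ) := by
      rw [← hsymm]; exact hmc
    calc ∫ ω, f (c + Z ω) ∂μ = ∫ x, f (c + x) ∂(Measure.map Z μ) :=
          (integral_map hZ.aemeasurable hmc).symm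
      _ = ∫ x, f (c + x) ∂(Measure.map (fun ω => -Z ω) μ) := by rw [hsymm]
      _ = ∫ ω, f (c + -Z ω) ∂μ := integral_map hZ.neg.aemeasurable hmc'
      _ = ∫ ω, f (c - Z ω) ∂μ := by simp [sub_eq_add_neg]
  -- positive measure of Z ≠ 0
  have hmeas0 : MeasurableSet {ω | Z ω = 0} := hZ (measurableSet_singleton 0)
  have hne : 0 < μ {ω | Z ω ≠ 0} := by
    have h := prob_compl_eq_one_sub (μ := μ) hmeas0
    have : μ {ω | Z ω = 0}ᶜ = 1 - μ {ω | Z ω = 0} := h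
    have hlt : 0 < 1 - μ {ω | Z ω = 0} := by
      refine tsub_pos_of_lt hZ0
    have hcompl : {ω | Z ω = 0}ᶜ = {ω | Z ω ≠ 0} := by ext ω; simp
    rw [← hcompl, this]
    exact hlt
  -- key pointwise bounds
  have hkey_lo : ∀ a z : ℝ, 0 < a → 1 < f (a + z) + f (a - z) := by
    intro a z ha
    have hu : 1 < Real.exp a := by
      rw [show (1:ℝ) = Real.exp 0 by simp]; exact Real.exp_lt_exp.2 ha
    have ht : 0 < Real.exp z := Real.exp_pos z
    rw [hf, hf, Real.exp_add, Real.exp_sub, alg_rw (by linarith) ht]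
    exact alg_lower hu ht
  have hkey_hi : ∀ a z : ℝ, 0 < a → f (a + z) + f (a - z) ≤ 2 * f a := by
    intro a z ha
    have hu : 1 < Real.exp a := by
      rw [show (1:ℝ) = Real.exp 0 by simp]; exact Real.exp_lt_exp.2 ha
    have ht : 0 < Real.exp z := Real.exp_pos z
    rw [hf (a+z), hf (a-z), hf a, Real.exp_add, Real.exp_sub, alg_rw (by linarith) ht]
    exact alg_upper hu ht
  have hkey_hi' : ∀ a z : ℝ, 0 < a → z ≠ 0 → f (a + z) + f (a - z) < 2 * f a := by
    intro a z ha hz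
    have hu : 1 < Real.exp a := by
      rw [show (1:ℝ) = Real.exp 0 by simp]; exact Real.exp_lt_exp.2 ha
    have ht : 0 < Real.exp z := Real.exp_pos z
    have ht1 : Real.exp z ≠ 1 := fun h => hz (by rwa [Real.exp_eq_one_iff] at h)
    rw [hf (a+z), hf (a-z), hf a, Real.exp_add, Real.exp_sub, alg_rw (by linarith) ht]
    exact alg_upper_strict hu ht ht1
  -- main claim for a > 0
  have main : ∀ a : ℝ, 0 < a →
      1 / 2 < ∫ ω, f (a + Z ω) ∂μ ∧ ∫ ω, f (a + Z ω) ∂μ < f a := by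
    intro a ha
    have hint1 : Integrable (fun ω => f (a + Z ω)) μ := hint _ (measurable_const.add hZ)
    have hint2 : Integrable (fun ω => f (a - Z ω)) μ := hint _ (measurable_const.sub hZ)
    have hint12 : Integrable (fun ω => f (a + Z ω) + f (a - Z ω)) μ := hint1.add hint2
    have hI2 : 2 * ∫ ω, f (a + Z ω) ∂μ = ∫ ω, (f (a + Z ω) + f (a - Z ω)) ∂μ := by
      rw [integral_add hint1 hint2, ← hsym a]; ring
    constructor
    · -- lower bound
      have hpos : 0 < ∫ ω, (f (a + Z ω) + f (a - Z ω) - 1) ∂μ := by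
        rw [integral_pos_iff_support_of_nonneg]
        · have : Function.support (fun ω => f (a + Z ω) + f (a - Z ω) - 1) = Set.univ := by
            ext ω; simp only [Function.mem_support, Set.mem_univ, iff_true]
            have := hkey_lo a (Z ω) ha
            intro h; linarith [h]
          rw [this]; simp
        · intro ω; have := hkey_lo a (Z ω) ha; simp; linarith
        · exact hint12.sub (integrable_const 1)
      rw [integral_sub hint12 (integrable_const 1)] at hpos
      simp only [integral_const, measure_univ, probReal_univ, ENNReal.toReal_one, smul_eq_mul, one_mul] at hpos
      have : 1 < ∫ ω, (f (a + Z ω) + f (a - Z ω)) ∂μ := by linarith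
      linarith [hI2 ▸ this]
    · -- upper bound
      have hpos : 0 < ∫ ω, (2 * f a - (f (a + Z ω) + f (a - Z ω))) ∂μ := by
        rw [integral_pos_iff_support_of_nonneg]
        · refine lt_of_lt_of_le hne (measure_mono ?_)
          intro ω hω
          simp only [Function.mem_support]
          have := hkey_hi' a (Z ω) ha hω
          intro h; linarith [h]
        · intro ω; have := hkey_hi a (Z ω) ha; simp; linarith
        · exact (integrable_const _).sub hint12
      rw [integral_sub (integrable_const (2 * f a)) hint12] at hpos
      simp only [integral_const, measure_univ, probReal_univ, ENNReal.toReal_one, smul_eq_mul, one_mul] at hpos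
      have : ∫ ω, (f (a + Z ω) + f (a - Z ω)) ∂μ < 2 * f a := by linarith
      linarith [hI2 ▸ this]
  refine ⟨main, fun a ha => ?_⟩
  -- negative case by reflection
  have hflip : ∫ ω, f (a + Z ω) ∂μ = 1 - ∫ ω, f (-a + Z ω) ∂μ := by
    have h1 : ∀ ω, f (a + Z ω) = 1 - f (-a - Z ω) := by
      intro ω
      have := hfneg (-a - Z ω)
      rw [show -(-a - Z ω) = a + Z ω by ring] at this
      linarith
    have hint2 : Integrable (fun ω => f (-a - Z ω)) μ := hint _ (measurable_const.sub hZ)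
    calc ∫ ω, f (a + Z ω) ∂μ = ∫ ω, (1 - f (-a - Z ω)) ∂μ := by
          congr 1; ext ω; exact h1 ω
      _ = 1 - ∫ ω, f (-a - Z ω) ∂μ := by
          rw [integral_sub (integrable_const 1) hint2]
          simp
      _ = 1 - ∫ ω, f (-a + Z ω) ∂μ := by rw [← hsym (-a)]
  obtain ⟨h1, h2⟩ := main (-a) (by linarith)
  have hfa : f a = 1 - f (-a) := by
    have := hfneg (-a); simp at this; linarith
  rw [hflip, hfa]
  constructor <;> linarith
end

section
/- Let Φ denote the cumulative distribution function of the standard normal distribution, and let σ > 0. If Z is a real random variable with the Gaussian distribution N(0, σ²), then for every a ∈ ℝ, E[Φ(a + Z)] = Φ(a / √(1 + σ²)). -/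
open MeasureTheory ProbabilityTheory Real Set


noncomputable def stdPdf (u : ℝ) : ℝ := (1 / Real.sqrt (2 * Real.pi)) * Real.exp (-u ^ 2 / 2)

noncomputable def gPdf (σ : ℝ) (z : ℝ) : ℝ := (Real.sqrt (2*Real.pi*σ^2))⁻¹ * Real.exp (-z^2/(2*σ^2))

lemma stdPdf_integrable : Integrable stdPdf := by
  have h : Integrable (fun u : ℝ => Real.exp (-(2⁻¹ : ℝ) * u ^ 2)) := integrable_exp_neg_mul_sq (by norm_num)
  have : stdPdf = fun u => (1 / Real.sqrt (2 * Real.pi)) * Real.exp (-(2⁻¹ : ℝ) * u ^ 2) := by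
    funext u; unfold stdPdf; ring_nf
  rw [this]; exact h.const_mul _

lemma stdPdf_continuous : Continuous stdPdf := by unfold stdPdf; fun_prop

lemma gPdf_integrable (σ : ℝ) (hσ : 0 < σ) : Integrable (gPdf σ) := by
  have h : Integrable (fun z : ℝ => Real.exp (-(1/(2*σ^2) : ℝ) * z ^ 2)) :=
    integrable_exp_neg_mul_sq (by positivity)
  have : gPdf σ = fun z => (Real.sqrt (2*Real.pi*σ^2))⁻¹ * Real.exp (-(1/(2*σ^2) : ℝ) * z ^ 2) := by
    funext z; unfold gPdf; congr 1; congr 1; field_simp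
  rw [this]; exact h.const_mul _

lemma gPdf_continuous (σ : ℝ) : Continuous (gPdf σ) := by unfold gPdf; fun_prop

lemma gPdf_nonneg (σ : ℝ) (z : ℝ) : 0 ≤ gPdf σ z := by unfold gPdf; positivity

lemma convGauss (σ : ℝ) (hσ : 0 < σ) (w : ℝ) :
    ∫ z : ℝ, Real.exp (-(w+z)^2/2) * Real.exp (-z^2/(2*σ^2)) =
      Real.sqrt (Real.pi / ((1+σ^2)/(2*σ^2))) * Real.exp (-w^2/(2*(1+σ^2))) := by
  have hσ2 : (0:ℝ) < 1 + σ^2 := by positivity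
  have hb : (0:ℝ) < (1+σ^2)/(2*σ^2) := by positivity
  have key : ∀ z : ℝ, Real.exp (-(w+z)^2/2) * Real.exp (-z^2/(2*σ^2))
      = Real.exp (-w^2/(2*(1+σ^2))) * Real.exp (-((1+σ^2)/(2*σ^2)) * (z + σ^2*w/(1+σ^2))^2) := by
    intro z
    rw [← Real.exp_add, ← Real.exp_add]
    congr 1
    field_simp
    ring
  simp_rw [key]
  rw [MeasureTheory.integral_const_mul]
  rw [integral_add_right_eq_self (fun z => Real.exp (-((1+σ^2)/(2*σ^2)) * z^2)) (σ^2*w/(1+σ^2))]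
  rw [integral_gaussian]
  ring

lemma convPdf (σ : ℝ) (hσ : 0 < σ) (u : ℝ) :
    ∫ z : ℝ, stdPdf (u+z) * gPdf σ z =
      (Real.sqrt (2*Real.pi*(1+σ^2)))⁻¹ * Real.exp (-u^2/(2*(1+σ^2))) := by
  have hpt : ∀ z : ℝ, stdPdf (u+z) * gPdf σ z
      = ((1 / Real.sqrt (2*Real.pi)) * (Real.sqrt (2*Real.pi*σ^2))⁻¹) *
        (Real.exp (-(u+z)^2/2) * Real.exp (-z^2/(2*σ^2))) := by
    intro z; unfold stdPdf gPdf; ring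
  simp_rw [hpt]
  rw [MeasureTheory.integral_const_mul, convGauss σ hσ u, ← mul_assoc]
  congr 1
  have hπ : (0:ℝ) < Real.pi := Real.pi_pos
  have h3 : (0:ℝ) < 1+σ^2 := by positivity
  rw [one_div, ← Real.sqrt_inv, ← Real.sqrt_inv, ← Real.sqrt_inv, ← Real.sqrt_mul (by positivity),
    ← Real.sqrt_mul (by positivity)]
  congr 1
  field_simp

-- main Fubini lemma
lemma main_integral (σ : ℝ) (hσ : 0 < σ) (a : ℝ) :
    ∫ z : ℝ, (∫ u in Iic (a+z), stdPdf u) * gPdf σ z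
      = ∫ u in Iic (a / Real.sqrt (1+σ^2)), stdPdf u := by
  have h3 : (0:ℝ) < 1+σ^2 := by positivity
  set c := Real.sqrt (1+σ^2) with hcdef
  have hc : 0 < c := Real.sqrt_pos.mpr h3
  have hc2 : c^2 = 1+σ^2 := Real.sq_sqrt h3.le
  set C := (Real.sqrt (2*Real.pi*(1+σ^2)))⁻¹ with hCdef
  set f : ℝ → ℝ → ℝ := fun z u => (Iic a).indicator (fun u => stdPdf (u+z) * gPdf σ z) u with hfdef
  -- step 1
  have step1 : ∀ z : ℝ, (∫ u in Iic (a+z), stdPdf u) * gPdf σ z = ∫ u, f z u := by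
    intro z
    rw [← integral_indicator measurableSet_Iic, ← integral_add_right_eq_self
      (fun u => (Iic (a+z)).indicator stdPdf u) z, ← MeasureTheory.integral_mul_const]
    congr 1
    funext u
    by_cases hu : u ≤ a
    · simp [f, Set.indicator_of_mem, hu, add_le_add_iff_right, Set.mem_Iic]
    · simp [f, Set.indicator_of_notMem, hu, add_le_add_iff_right, Set.mem_Iic]
  -- measurability
  have hmeas : Measurable (Function.uncurry f) := by
    have : Function.uncurry f =
        ({p : ℝ × ℝ | p.2 ≤ a}).indicator (fun p => stdPdf (p.2+p.1) * gPdf σ p.1) := by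
      funext p
      rcases p with ⟨z, u⟩
      by_cases hu : u ≤ a
      · simp [Function.uncurry, f, Set.indicator_of_mem, hu, Set.mem_Iic]
      · simp [Function.uncurry, f, Set.indicator_of_notMem, hu, Set.mem_Iic]
    rw [this]
    exact (((stdPdf_continuous.comp (continuous_snd.add continuous_fst)).mul
      ((gPdf_continuous σ).comp continuous_fst)).measurable).indicator
      (measurableSet_Iic.preimage measurable_snd)
  have hslice : ∀ z : ℝ, Integrable (f z) := fun z =>
    ((stdPdf_integrable.comp_add_right z).mul_const (gPdf σ z)).indicator measurableSet_Iic
  have hf_nonneg : ∀ z u, 0 ≤ f z u := by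
    intro z u
    apply Set.indicator_nonneg
    intro x _
    have : 0 ≤ stdPdf (x+z) := by unfold stdPdf; positivity
    exact mul_nonneg this (gPdf_nonneg σ z)
  -- integrability on product
  have hint : Integrable (Function.uncurry f) ((volume : Measure ℝ).prod volume) := by
    rw [integrable_prod_iff hmeas.aestronglyMeasurable]
    refine ⟨ae_of_all _ fun z => hslice z, ?_⟩
    apply Integrable.mono' (((gPdf_integrable σ hσ).const_mul (∫ u, stdPdf u)))
      (hmeas.norm.aestronglyMeasurable.integral_prod_right')
    filter_upwards with z
    simp only [Function.uncurry_apply_pair]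
    have h1 : ∫ u, ‖f z u‖ = ∫ u, f z u := by
      congr 1; funext u; exact Real.norm_of_nonneg (hf_nonneg z u)
    rw [Real.norm_of_nonneg (by rw [h1]; exact integral_nonneg (hf_nonneg z)), h1]
    calc ∫ u, f z u ≤ ∫ u, stdPdf (u+z) * gPdf σ z := by
          apply integral_mono (hslice z) ((stdPdf_integrable.comp_add_right z).mul_const _)
          intro u
          by_cases hu : u ∈ Iic a
          · rw [show f z u = stdPdf (u+z) * gPdf σ z from Set.indicator_of_mem hu _]
          · rw [show f z u = 0 from Set.indicator_of_notMem hu _]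
            have : 0 ≤ stdPdf (u+z) := by unfold stdPdf; positivity
            exact mul_nonneg this (gPdf_nonneg σ z)
      _ = (∫ u, stdPdf u) * gPdf σ z := by
          rw [MeasureTheory.integral_mul_const, integral_add_right_eq_self stdPdf z]
  -- swap
  simp_rw [step1]
  rw [integral_integral_swap hint]
  -- inner integral
  have step4 : ∀ u : ℝ, (∫ z, f z u) = (Iic a).indicator (fun u => C * Real.exp (-u^2/(2*(1+σ^2)))) u := by
    intro u
    by_cases hu : u ∈ Iic a
    · rw [Set.indicator_of_mem hu]
      have : ∀ z : ℝ, f z u = stdPdf (u+z) * gPdf σ z := fun z => Set.indicator_of_mem hu _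
      simp_rw [this]
      exact convPdf σ hσ u
    · rw [Set.indicator_of_notMem hu]
      have : ∀ z : ℝ, f z u = 0 := fun z => Set.indicator_of_notMem hu _
      simp_rw [this]
      exact integral_zero _ _
  simp_rw [step4]
  -- scaling
  set G : ℝ → ℝ := (Iic a).indicator (fun u => C * Real.exp (-u^2/(2*(1+σ^2)))) with hGdef
  have hscale := MeasureTheory.Measure.integral_comp_mul_left G c
  have : ∫ u, G u = c * ∫ x, G (c * x) := by
    rw [hscale, abs_of_pos (inv_pos.mpr hc), smul_eq_mul, ← mul_assoc,
      mul_inv_cancel₀ hc.ne', one_mul]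
  rw [this, ← MeasureTheory.integral_const_mul, ← integral_indicator measurableSet_Iic]
  congr 1
  funext x
  have hcC : c * C = 1 / Real.sqrt (2*Real.pi) := by
    rw [hCdef, Real.sqrt_mul (by positivity), ← hcdef, mul_inv, ← mul_assoc,
      mul_comm c, mul_assoc, mul_inv_cancel₀ hc.ne', mul_one, one_div]
  have hexp : -(c*x)^2/(2*(1+σ^2)) = -x^2/2 := by
    rw [mul_pow, hc2]; field_simp
  by_cases hx : c * x ≤ a
  · have hx' : x ≤ a / c := (le_div_iff₀ hc).mpr (by linarith [mul_comm c x] )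
    rw [hGdef]
    rw [Set.indicator_of_mem (Set.mem_Iic.mpr hx), Set.indicator_of_mem (Set.mem_Iic.mpr hx')]
    rw [hexp, ← mul_assoc, hcC]
    rfl
  · have hx' : ¬ x ≤ a / c := by
      intro h; exact hx (by rw [mul_comm]; exact (le_div_iff₀ hc).mp h)
    rw [hGdef, Set.indicator_of_notMem (by simpa using hx), Set.indicator_of_notMem (by simpa using hx'),
      mul_zero]

lemma Phi_monotone (Φ : ℝ → ℝ)
    (hΦ : ∀ x, Φ x = ∫ u in Set.Iic x, stdPdf u) : Monotone Φ := by
  intro x y hxy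
  rw [hΦ x, hΦ y]
  apply setIntegral_mono_set stdPdf_integrable.integrableOn
  · filter_upwards with u using by unfold stdPdf; positivity
  · exact HasSubset.Subset.eventuallyLE (Iic_subset_Iic.mpr hxy)

/-- Exact probit marginalization: if `Φ` is the standard normal cumulative
distribution function and `Z` is a random variable with the centered Gaussian
distribution `N(0, σ²)`, then `E[Φ(a + Z)] = Φ(a / √(1 + σ²))` for every `a`. -/

theorem probit_gaussian_marginalization {Ω : Type*} [MeasurableSpace Ω]
    (μ : Measure Ω) [IsProbabilityMeasure μ]
    (Φ : ℝ → ℝ)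
    (hΦ : ∀ x, Φ x =
      ∫ u in Set.Iic x, (1 / Real.sqrt (2 * Real.pi)) * Real.exp (-u ^ 2 / 2))
    (σ : ℝ) (hσ : 0 < σ)
    (Z : Ω → ℝ) (hZ : Measurable Z)
    (hZdist : Measure.map Z μ = gaussianReal 0 (Real.toNNReal (σ ^ 2))) :
    ∀ a : ℝ, ∫ ω, Φ (a + Z ω) ∂μ = Φ (a / Real.sqrt (1 + σ ^ 2)) := by
  have hΦ' : ∀ x, Φ x = ∫ u in Set.Iic x, stdPdf u := hΦ
  intro a
  set v : NNReal := Real.toNNReal (σ ^ 2) with hvdef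
  have hv : v ≠ 0 := ne_of_gt (Real.toNNReal_pos.mpr (by positivity))
  have hvcoe : (v : ℝ) = σ ^ 2 := Real.coe_toNNReal _ (sq_nonneg σ)
  have hΦmeas : Measurable Φ := (Phi_monotone Φ hΦ').measurable
  have hAESM : AEStronglyMeasurable (fun z => Φ (a+z)) (Measure.map Z μ) :=
    (hΦmeas.comp (measurable_id.const_add a)).aestronglyMeasurable
  have hgpdf : ∀ z : ℝ, gaussianPDFReal 0 v z = gPdf σ z := by
    intro z
    rw [gaussianPDFReal, gPdf, hvcoe, sub_zero]
  calc ∫ ω, Φ (a + Z ω) ∂μ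
      = ∫ z, Φ (a+z) ∂(Measure.map Z μ) := (integral_map hZ.aemeasurable hAESM).symm
    _ = ∫ z, Φ (a+z) ∂((volume : Measure ℝ).withDensity
          (fun x => ((gaussianPDFReal 0 v x).toNNReal : ENNReal))) := by
        rw [hZdist, gaussianReal_of_var_ne_zero 0 hv]; rfl
    _ = ∫ z, (gaussianPDFReal 0 v z).toNNReal • Φ (a+z) := by
        rw [integral_withDensity_eq_integral_smul
          (show Measurable fun x => (gaussianPDFReal 0 v x).toNNReal from
            measurable_real_toNNReal.comp (measurable_gaussianPDFReal 0 v))]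
    _ = ∫ z, (∫ u in Set.Iic (a+z), stdPdf u) * gPdf σ z := by
        congr 1
        funext z
        rw [NNReal.smul_def, Real.coe_toNNReal _ (gaussianPDFReal_nonneg 0 v z), smul_eq_mul,
          hgpdf z, mul_comm, hΦ']
    _ = ∫ u in Set.Iic (a / Real.sqrt (1+σ^2)), stdPdf u := main_integral σ hσ a
    _ = Φ (a / Real.sqrt (1 + σ ^ 2)) := (hΦ' _).symm
end

section
/- Consider a random-intercept probit regression model: conditional on a random intercept Z ~ N(0, σ²) with σ > 0, the success probability at covariate value t ∈ ℝ is Φ(β₀ + β₁ t + Z), where Φ is the standard normal cumulative distribution function and β₀, β₁ ∈ ℝ. Then the marginal success probability is exactly of probit form: for every t ∈ ℝ, E[Φ(β₀ + β₁ t + Z)] = Φ(β₀^M + β₁^M t) with β₀^M = β₀/√(1 + σ²) and β₁^M = β₁/√(1 + σ²). In particular, if β₁ ≠ 0 then |β₁^M| < |β₁|, i.e., the marginal covariate effect is strictly attenuated relative to the random-effects covariate effect, and β₁/β₁^M = √(σ² + 1) > 1. -/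
open MeasureTheory ProbabilityTheory

section Aux
open Real intervalIntegral
open scoped NNReal ENNReal

noncomputable def snpdf (u : ℝ) : ℝ := (1 / Real.sqrt (2 * Real.pi)) * Real.exp (-u ^ 2 / 2)

lemma snpdf_cont : Continuous snpdf := by
  unfold snpdf; fun_prop

lemma snpdf_nonneg (u : ℝ) : 0 ≤ snpdf u := by
  unfold snpdf; positivity

lemma snpdf_integrable : Integrable snpdf := by
  have h : Integrable fun x : ℝ => Real.exp (-(1/2 : ℝ) * x ^ 2) :=
    integrable_exp_neg_mul_sq (by norm_num)
  have := h.const_mul (1 / Real.sqrt (2 * Real.pi))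
  convert this using 2 with x
  unfold snpdf; ring_nf

lemma snpdf_integral : ∫ u, snpdf u = 1 := by
  unfold snpdf
  rw [MeasureTheory.integral_const_mul]
  have h : ∫ x : ℝ, Real.exp (-(1/2 : ℝ) * x ^ 2) = Real.sqrt (Real.pi / (1/2)) :=
    integral_gaussian (1/2)
  have h2 : (fun x : ℝ => Real.exp (-x ^ 2 / 2)) = fun x : ℝ => Real.exp (-(1/2 : ℝ) * x ^ 2) := by
    ext x; ring_nf
  rw [h2, h]
  rw [one_div, inv_mul_eq_div, div_eq_one_iff_eq (by positivity)]
  rw [show Real.pi / (1/2 : ℝ) = 2 * Real.pi by ring]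

lemma snpdf_le (u : ℝ) : snpdf u ≤ 1 := by
  unfold snpdf
  have h1 : Real.exp (-u ^ 2 / 2) ≤ 1 := by
    rw [Real.exp_le_one_iff]
    have : (0:ℝ) ≤ u ^ 2 / 2 := by positivity
    linarith
  have h0 : (1:ℝ) ≤ Real.sqrt (2 * Real.pi) := by
    rw [show (1:ℝ) = Real.sqrt 1 by simp]
    exact Real.sqrt_le_sqrt (by nlinarith [Real.pi_gt_three])
  have h2 : 1 / Real.sqrt (2 * Real.pi) ≤ 1 := by
    rw [div_le_one (by positivity)]; exact h0
  calc 1 / Real.sqrt (2 * Real.pi) * Real.exp (-u ^ 2 / 2) ≤ 1 * 1 :=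
        mul_le_mul h2 h1 (by positivity) (by norm_num)
    _ = 1 := by norm_num

noncomputable def Ψ (x : ℝ) : ℝ := ∫ u in Set.Iic x, snpdf u

lemma Ψ_eq (x : ℝ) : Ψ x = Ψ 0 + ∫ u in (0:ℝ)..x, snpdf u := by
  have := intervalIntegral.integral_Iic_sub_Iic (f := snpdf) (μ := volume)
    (snpdf_integrable.integrableOn) (snpdf_integrable.integrableOn) (a := 0) (b := x)
  unfold Ψ; linarith

lemma Ψ_hasDeriv (x : ℝ) : HasDerivAt Ψ (snpdf x) x := by
  have h : HasDerivAt (fun u => ∫ t in (0:ℝ)..u, snpdf t) (snpdf x) x :=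
    intervalIntegral.integral_hasDerivAt_right
      (snpdf_integrable.intervalIntegrable)
      (snpdf_cont.aestronglyMeasurable.stronglyMeasurableAtFilter)
      snpdf_cont.continuousAt
  have h2 := h.const_add (Ψ 0)
  have hfun : Ψ = fun u => Ψ 0 + ∫ t in (0:ℝ)..u, snpdf t := funext Ψ_eq
  rw [hfun]; exact h2

lemma Ψ_cont : Continuous Ψ := by
  have : Differentiable ℝ Ψ := fun x => (Ψ_hasDeriv x).differentiableAt
  exact this.continuous

lemma Ψ_nonneg (x : ℝ) : 0 ≤ Ψ x :=
  setIntegral_nonneg measurableSet_Iic (fun u _ => snpdf_nonneg u)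

lemma Ψ_le_one (x : ℝ) : Ψ x ≤ 1 := by
  rw [← snpdf_integral]
  exact setIntegral_le_integral snpdf_integrable
    (Filter.Eventually.of_forall snpdf_nonneg)

lemma Ψ_tendsto_bot : Filter.Tendsto Ψ Filter.atBot (nhds 0) := by
  have h : Filter.Tendsto (fun x : ℝ => ∫ u in x..(0:ℝ), snpdf u) Filter.atBot
      (nhds (∫ u in Set.Iic (0:ℝ), snpdf u)) :=
    intervalIntegral_tendsto_integral_Iic 0 snpdf_integrable.integrableOn Filter.tendsto_id
  have h2 : Filter.Tendsto (fun x : ℝ => Ψ 0 - ∫ u in x..(0:ℝ), snpdf u) Filter.atBot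
      (nhds (Ψ 0 - Ψ 0)) := (tendsto_const_nhds.sub h)
  simp only [sub_self] at h2
  refine h2.congr (fun x => ?_)
  have := intervalIntegral.integral_Iic_sub_Iic (f := snpdf) (μ := volume)
    (snpdf_integrable.integrableOn) (snpdf_integrable.integrableOn) (a := x) (b := 0)
  unfold Ψ; linarith

lemma integral_gaussianReal_eq {v : ℝ≥0} (hv : v ≠ 0) (g : ℝ → ℝ) :
    ∫ z, g z ∂(gaussianReal 0 v) = ∫ z, gaussianPDFReal 0 v z * g z := by
  rw [gaussianReal_of_var_ne_zero _ hv]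
  have hpdf : gaussianPDF 0 v = fun z => (((gaussianPDFReal 0 v z).toNNReal : ℝ≥0) : ℝ≥0∞) := rfl
  rw [hpdf]
  rw [integral_withDensity_eq_integral_smul
    ((measurable_gaussianPDFReal 0 v).real_toNNReal) g]
  congr 1
  ext z
  rw [NNReal.smul_def, smul_eq_mul, Real.coe_toNNReal _ (gaussianPDFReal_nonneg 0 v z)]

lemma key_pdf_integral (σ a : ℝ) (hσ : 0 < σ) :
    ∫ z, gaussianPDFReal 0 (Real.toNNReal (σ^2)) z * snpdf (a + z) =
      (1 / Real.sqrt (1 + σ^2)) * snpdf (a / Real.sqrt (1 + σ^2)) := by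
  set s := σ^2 with hs
  have hs0 : 0 < s := by positivity
  have hcoe : ((Real.toNNReal s : ℝ≥0) : ℝ) = s := Real.coe_toNNReal _ hs0.le
  set b := (1+s)/(2*s) with hbdef
  set c := a*s/(1+s) with hcdef
  set d := -a^2/(2*(1+s)) with hddef
  have hb : 0 < b := by rw [hbdef]; positivity
  have h1s : (0:ℝ) < 1 + s := by linarith
  have hexp : ∀ z : ℝ, gaussianPDFReal 0 (Real.toNNReal s) z * snpdf (a + z)
      = ((Real.sqrt (2*Real.pi*s))⁻¹ * (1/Real.sqrt (2*Real.pi)) * Real.exp d)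
        * Real.exp (-b * (z + c)^2) := by
    intro z
    unfold gaussianPDFReal snpdf
    rw [hcoe]
    have : -(z - 0)^2/(2*s) + (-(a+z)^2/2) = d + -b * (z + c)^2 := by
      rw [hbdef, hcdef, hddef]; field_simp; ring
    calc (Real.sqrt (2*Real.pi*s))⁻¹ * Real.exp (-(z-0)^2/(2*s))
          * (1/Real.sqrt (2*Real.pi) * Real.exp (-(a+z)^2/2))
        = (Real.sqrt (2*Real.pi*s))⁻¹ * (1/Real.sqrt (2*Real.pi))
          * (Real.exp (-(z-0)^2/(2*s)) * Real.exp (-(a+z)^2/2)) := by ring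
      _ = (Real.sqrt (2*Real.pi*s))⁻¹ * (1/Real.sqrt (2*Real.pi))
          * Real.exp (-(z-0)^2/(2*s) + (-(a+z)^2/2)) := by rw [← Real.exp_add]
      _ = (Real.sqrt (2*Real.pi*s))⁻¹ * (1/Real.sqrt (2*Real.pi))
          * Real.exp (d + -b * (z + c)^2) := by rw [this]
      _ = _ := by rw [Real.exp_add]; ring
  rw [funext hexp]
  rw [MeasureTheory.integral_const_mul]
  have hint : ∫ z : ℝ, Real.exp (-b * (z + c)^2) = Real.sqrt (Real.pi / b) := by
    rw [integral_add_right_eq_self (fun z => Real.exp (-b * z^2)) c]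
    exact integral_gaussian b
  rw [hint]
  -- now pure arithmetic
  have hsq : Real.sqrt (1+s) ^ 2 = 1 + s := Real.sq_sqrt h1s.le
  have hτ : (0:ℝ) < Real.sqrt (1+s) := Real.sqrt_pos.mpr h1s
  have h2πs : (0:ℝ) < Real.sqrt (2*Real.pi*s) := Real.sqrt_pos.mpr (by positivity)
  have hπb : Real.pi / b = (2*Real.pi*s) / (1+s) := by
    rw [hbdef]; field_simp
  have hsqrtb : Real.sqrt (Real.pi / b) = Real.sqrt (2*Real.pi*s) / Real.sqrt (1+s) := by
    rw [hπb, Real.sqrt_div (by positivity)]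
  have hd : Real.exp d = Real.exp (-(a / Real.sqrt (1+s))^2/2) := by
    congr 1
    rw [hddef, div_pow, hsq]
    field_simp [h1s.ne']
  rw [hsqrtb, hd]
  unfold snpdf
  field_simp

lemma key_identity (σ : ℝ) (hσ : 0 < σ) (a : ℝ) :
    ∫ z, Ψ (a + z) ∂(gaussianReal 0 (Real.toNNReal (σ^2))) = Ψ (a / Real.sqrt (1+σ^2)) := by
  set v : ℝ≥0 := Real.toNNReal (σ^2) with hvdef
  have hv : v ≠ 0 := by
    rw [hvdef]
    simp only [ne_eq, Real.toNNReal_eq_zero, not_le]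
    positivity
  set γ := gaussianReal 0 v with hγdef
  have : IsProbabilityMeasure γ := by rw [hγdef]; infer_instance
  set τ := Real.sqrt (1+σ^2) with hτdef
  have hτ : 0 < τ := Real.sqrt_pos.mpr (by positivity)
  set G := fun x : ℝ => ∫ z, Ψ (x + z) ∂γ with hGdef
  set F := fun x : ℝ => Ψ (x / τ) with hFdef
  have hΨint : ∀ x : ℝ, Integrable (fun z => Ψ (x + z)) γ := by
    intro x
    refine Integrable.mono' (integrable_const 1)
      ((Ψ_cont.comp (continuous_const.add continuous_id)).aestronglyMeasurable) ?_
    filter_upwards with z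
    rw [Real.norm_eq_abs, abs_of_nonneg (Ψ_nonneg _)]
    exact Ψ_le_one _
  have hG' : ∀ x : ℝ, HasDerivAt G ((1/τ) * snpdf (x/τ)) x := by
    intro x
    have h := hasDerivAt_integral_of_dominated_loc_of_deriv_le
      (F := fun x z => Ψ (x + z)) (F' := fun x z => snpdf (x + z)) (μ := γ)
      (x₀ := x) (bound := fun _ => 1) (s := Metric.ball x 1) (Metric.ball_mem_nhds x one_pos)
      (Filter.Eventually.of_forall (fun y =>
        (Ψ_cont.comp (continuous_const.add continuous_id)).aestronglyMeasurable))
      (hΨint x)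
      ((snpdf_cont.comp (continuous_const.add continuous_id)).aestronglyMeasurable)
      (Filter.Eventually.of_forall (fun z y _ => by
        rw [Real.norm_eq_abs, abs_of_nonneg (snpdf_nonneg _)]
        exact snpdf_le _))
      (integrable_const 1)
      (Filter.Eventually.of_forall (fun z y _ => by
        have h1 : HasDerivAt (fun w : ℝ => w + z) 1 y := (hasDerivAt_id y).add_const z
        have := (Ψ_hasDeriv (y + z)).comp y h1
        rw [mul_one] at this; exact this))
    have h2 := h.2
    have h3 : ∫ z, snpdf (x + z) ∂γ = (1/τ) * snpdf (x/τ) := by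
      rw [hγdef, hvdef, integral_gaussianReal_eq (by rw [← hvdef]; exact hv) (fun z => snpdf (x + z)),
        key_pdf_integral σ x hσ, ← hτdef]
    rw [h3] at h2
    exact h2
  have hF' : ∀ x : ℝ, HasDerivAt F ((1/τ) * snpdf (x/τ)) x := by
    intro x
    have h1 : HasDerivAt (fun w : ℝ => w / τ) (1/τ) x := (hasDerivAt_id x).div_const τ
    have := (Ψ_hasDeriv (x / τ)).comp x h1
    rw [hFdef]
    rw [mul_comm]; exact this
  have hconst : ∀ x y : ℝ, G x - F x = G y - F y := by
    have hdiff : ∀ z : ℝ, HasDerivAt (fun w => G w - F w) 0 z := by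
      intro z
      have := (hG' z).sub (hF' z)
      rw [sub_self] at this; exact this
    exact fun x y => is_const_of_deriv_eq_zero
      (fun z => (hdiff z).differentiableAt) (fun z => (hdiff z).deriv) x y
  have hGtendsto : Filter.Tendsto G Filter.atBot (nhds 0) := by
    rw [hGdef]
    have h0 : (0:ℝ) = ∫ (z : ℝ), (0:ℝ) ∂γ := by simp
    rw [h0]
    apply MeasureTheory.tendsto_integral_filter_of_dominated_convergence (bound := fun _ => (1:ℝ))
    · exact Filter.Eventually.of_forall (fun y =>
        (Ψ_cont.comp (continuous_const.add continuous_id)).aestronglyMeasurable)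
    · refine Filter.Eventually.of_forall (fun y => ?_)
      filter_upwards with z
      rw [Real.norm_eq_abs, abs_of_nonneg (Ψ_nonneg _)]
      exact Ψ_le_one _
    · exact integrable_const 1
    · filter_upwards with z
      exact Ψ_tendsto_bot.comp (Filter.tendsto_atBot_add_const_right _ z Filter.tendsto_id)
  have hFtendsto : Filter.Tendsto F Filter.atBot (nhds 0) := by
    rw [hFdef]
    exact Ψ_tendsto_bot.comp (Filter.tendsto_id.atBot_div_const hτ)
  have hzero : G a - F a = 0 := by
    have hc : Filter.Tendsto (fun x => G x - F x) Filter.atBot (nhds 0) := by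
      simpa using hGtendsto.sub hFtendsto
    have hc2 : Filter.Tendsto (fun x => G x - F x) Filter.atBot (nhds (G a - F a)) := by
      have : (fun x => G x - F x) = fun _ => G a - F a := funext (fun x => hconst x a)
      rw [this]
      exact tendsto_const_nhds
    exact tendsto_nhds_unique hc2 hc
  have := sub_eq_zero.mp hzero
  rw [hGdef, hFdef] at this
  simpa [hτdef] using this

end Aux

/-- Random-intercept probit regression: with random intercept `Z ~ N(0, σ²)`,
the marginal success probability `E[Φ(β₀ + β₁ t + Z)]` is exactly of probit form
`Φ(β₀^M + β₁^M t)` with `β₀^M = β₀/√(1 + σ²)` and `β₁^M = β₁/√(1 + σ²)`; in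
particular, if `β₁ ≠ 0` then `|β₁^M| < |β₁|` and
`β₁ / β₁^M = √(σ² + 1) > 1`: the marginal covariate effect is strictly
attenuated relative to the random-effects effect. -/
theorem probit_random_intercept_attenuation {Ω : Type*} [MeasurableSpace Ω]
    (μ : Measure Ω) [IsProbabilityMeasure μ]
    (Φ : ℝ → ℝ)
    (hΦ : ∀ x, Φ x =
      ∫ u in Set.Iic x, (1 / Real.sqrt (2 * Real.pi)) * Real.exp (-u ^ 2 / 2))
    (σ : ℝ) (hσ : 0 < σ)
    (Z : Ω → ℝ) (hZ : Measurable Z)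
    (hZdist : Measure.map Z μ = gaussianReal 0 (Real.toNNReal (σ ^ 2)))
    (β₀ β₁ : ℝ)
    (βM₀ βM₁ : ℝ)
    (hβM₀ : βM₀ = β₀ / Real.sqrt (1 + σ ^ 2))
    (hβM₁ : βM₁ = β₁ / Real.sqrt (1 + σ ^ 2)) :
    (∀ t : ℝ, ∫ ω, Φ (β₀ + β₁ * t + Z ω) ∂μ = Φ (βM₀ + βM₁ * t)) ∧
    (β₁ ≠ 0 →
      |βM₁| < |β₁| ∧ β₁ / βM₁ = Real.sqrt (σ ^ 2 + 1) ∧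
        1 < Real.sqrt (σ ^ 2 + 1)) := by
  have hΦΨ : Φ = Ψ := funext (fun x => hΦ x)
  have hτ : (0:ℝ) < Real.sqrt (1 + σ ^ 2) := Real.sqrt_pos.mpr (by positivity)
  have hτ1 : (1:ℝ) < Real.sqrt (1 + σ ^ 2) := by
    exact (Real.lt_sqrt (by norm_num)).mpr (by nlinarith)
  constructor
  · intro t
    set a := β₀ + β₁ * t with ha
    have hmeas : AEStronglyMeasurable (fun z => Ψ (a + z)) (Measure.map Z μ) :=
      (Ψ_cont.comp (continuous_const.add continuous_id)).aestronglyMeasurable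
    have h1 : ∫ ω, Φ (a + Z ω) ∂μ = ∫ z, Ψ (a + z) ∂(Measure.map Z μ) := by
      rw [hΦΨ, integral_map hZ.aemeasurable hmeas]
    rw [h1, hZdist, key_identity σ hσ a, hΦΨ]
    congr 1
    rw [hβM₀, hβM₁, ha]
    field_simp
  · intro hβ₁
    have hcomm : Real.sqrt (σ ^ 2 + 1) = Real.sqrt (1 + σ ^ 2) := by rw [add_comm]
    refine ⟨?_, ?_, by rw [hcomm]; exact hτ1⟩
    · rw [hβM₁, abs_div, abs_of_pos hτ]
      exact div_lt_self (abs_pos.mpr hβ₁) hτ1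
    · rw [hβM₁, hcomm]
      field_simp
end
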